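/- If A and B are semigroups with zero and neither A nor B is semilattice indecomposable, then A ×₀ B is not semilattice indecomposable. More precisely, if P_A ⊂ A and P_B ⊂ B are proper completely prime ideals, then the image of (P_A × B) ∪ (A × P_B) in A ×₀ B is a proper completely prime ideal of A ×₀ B. -/

import Mathlib

/-- A semigroup is semilattice indecomposable if every semigroup homomorphism from it to a
semilattice (a commutative idempotent semigroup) is constant. -/
def SemilatticeIndecomposable (S : Type u) [Semigroup S] : Prop :=
  ∀ (T : Type u) [Semigroup T],
    (∀ a b : T, a * b = b * a) → (∀ a : T, a * a = a) →
      ∀ f : S →ₙ* T, ∀ x y : S, f x = f y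

/-- An ideal of a semigroup. -/
def IsIdeal {S : Type u} [Mul S] (I : Set S) : Prop :=
  I.Nonempty ∧ ∀ a ∈ I, ∀ s : S, s * a ∈ I ∧ a * s ∈ I

/-- An ideal is completely prime if its complement is closed under multiplication. -/
def IsCompletelyPrime {S : Type u} [Mul S] (I : Set S) : Prop :=
  ∀ a b : S, a ∉ I → b ∉ I → a * b ∉ I


universe u

def ZProd (A B : Type u) [Zero A] [Zero B] : Type u :=
  Option {p : A × B // p.1 ≠ 0 ∧ p.2 ≠ 0}

variable {A B : Type u} [SemigroupWithZero A] [SemigroupWithZero B]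

open Classical in
noncomputable def zmul : ZProd A B → ZProd A B → ZProd A B
  | some p, some q =>
      if h : p.val.1 * q.val.1 ≠ 0 ∧ p.val.2 * q.val.2 ≠ 0 then
        some ⟨(p.val.1 * q.val.1, p.val.2 * q.val.2), h⟩
      else none
  | _, _ => none

theorem zmul_none_left (x : ZProd A B) : zmul none x = none := by cases x <;> rfl
theorem zmul_none_right (x : ZProd A B) : zmul x none = none := by cases x <;> rfl

theorem zmul_assoc (x y z : ZProd A B) : zmul (zmul x y) z = zmul x (zmul y z) := by
  have hs : ∀ p q : {p : A × B // p.1 ≠ 0 ∧ p.2 ≠ 0}, zmul (some p) (some q) =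
      (open Classical in if h : p.val.1 * q.val.1 ≠ 0 ∧ p.val.2 * q.val.2 ≠ 0 then
        some ⟨(p.val.1 * q.val.1, p.val.2 * q.val.2), h⟩ else none) := fun _ _ => rfl
  have hl : ∀ x : Option {p : A × B // p.1 ≠ 0 ∧ p.2 ≠ 0}, zmul none x = none := zmul_none_left
  have hr : ∀ x : Option {p : A × B // p.1 ≠ 0 ∧ p.2 ≠ 0}, zmul x none = none := zmul_none_right
  rcases x with _ | p
  · rfl
  rcases y with _ | q
  · rfl
  rcases z with _ | r
  · exact (zmul_none_right _).trans
      ((congrArg (zmul (some p)) (zmul_none_right (some q))).trans (zmul_none_right _)).symm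
  by_cases h1 : p.val.1 * q.val.1 ≠ 0 ∧ p.val.2 * q.val.2 ≠ 0 <;>
    by_cases h2 : q.val.1 * r.val.1 ≠ 0 ∧ q.val.2 * r.val.2 ≠ 0
  · rw [hs p q, hs q r, dif_pos h1, dif_pos h2, hs, hs]
    split_ifs with h3 h4
    · exact Option.some_inj.mpr (Subtype.ext (by simp [mul_assoc]))
    · exact absurd ⟨by rw [← mul_assoc]; exact h3.1, by rw [← mul_assoc]; exact h3.2⟩ h4
    · exact absurd ⟨by rw [mul_assoc]; exact (by assumption : _ ∧ _).1,
        by rw [mul_assoc]; exact (by assumption : _ ∧ _).2⟩ h3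
    · rfl
  · rw [hs p q, hs q r, dif_pos h1, dif_neg h2, hr, hs]
    rw [dif_neg]
    rcases not_and_or.mp h2 with h2 | h2 <;> push_neg at h2 <;> intro h
    · exact h.1 (by rw [mul_assoc, h2, mul_zero])
    · exact h.2 (by rw [mul_assoc, h2, mul_zero])
  · rw [hs p q, hs q r, dif_neg h1, dif_pos h2, hl, hs]
    symm
    rw [dif_neg]
    rcases not_and_or.mp h1 with h1 | h1 <;> push_neg at h1 <;> intro h
    · exact h.1 (by rw [← mul_assoc, h1, zero_mul])
    · exact h.2 (by rw [← mul_assoc, h1, zero_mul])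
  · rw [hs p q, hs q r, dif_neg h1, dif_neg h2, hl, hr]

noncomputable instance : SemigroupWithZero (ZProd A B) where
  zero := none
  mul := zmul
  zero_mul := zmul_none_left
  mul_zero := zmul_none_right
  mul_assoc := zmul_assoc

open Classical in
/-- The canonical (Rees quotient) map `A × B → A ×₀ B`. -/
noncomputable def reesMap (p : A × B) : ZProd A B :=
  if h : p.1 ≠ 0 ∧ p.2 ≠ 0 then some ⟨p, h⟩ else none

/-!
The Rees map `A × B → A ×₀ B` is a surjective homomorphism whose only non-singleton fibre,
the one over `0`, lies inside `S = (P_A × B) ∪ (A × P_B)`. The ideal `S` of `A × B` is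
completely prime, its complement being `(A \ P_A) × (B \ P_B)`, and being saturated it has a
proper completely prime image. The indicator of the complement of that image is then a
nonconstant homomorphism onto the two-element semilattice.
-/

open Set

section SemigroupIdeals

variable {M N : Type*} [Mul M] [Mul N]

theorem IsIdeal.zero_mem {S : Type*} [SemigroupWithZero S] {I : Set S} (hI : IsIdeal I) :
    (0 : S) ∈ I := by
  obtain ⟨a, ha⟩ := hI.1
  simpa using (hI.2 a ha 0).1

theorem IsIdeal.prod_union {I : Set M} {J : Set N} (hI : IsIdeal I) (hJ : IsIdeal J) :
    IsIdeal (I ×ˢ (univ : Set N) ∪ (univ : Set M) ×ˢ J) := by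
  obtain ⟨a, ha⟩ := hI.1
  obtain ⟨b, -⟩ := hJ.1
  refine ⟨⟨(a, b), Or.inl ⟨ha, trivial⟩⟩, ?_⟩
  rintro p (⟨hp, -⟩ | ⟨-, hp⟩) s
  · exact ⟨Or.inl ⟨(hI.2 _ hp s.1).1, trivial⟩, Or.inl ⟨(hI.2 _ hp s.1).2, trivial⟩⟩
  · exact ⟨Or.inr ⟨trivial, (hJ.2 _ hp s.2).1⟩, Or.inr ⟨trivial, (hJ.2 _ hp s.2).2⟩⟩

theorem IsCompletelyPrime.prod_union {I : Set M} {J : Set N} (hI : IsCompletelyPrime I)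
    (hJ : IsCompletelyPrime J) :
    IsCompletelyPrime (I ×ˢ (univ : Set N) ∪ (univ : Set M) ×ˢ J) := by
  intro p q hp hq
  simp only [mem_union, mem_prod, mem_univ, and_true, true_and, not_or] at hp hq ⊢
  exact ⟨hI _ _ hp.1 hq.1, hJ _ _ hp.2 hq.2⟩

theorem IsIdeal.image (f : M →ₙ* N) (hf : Function.Surjective f) {I : Set M} (hI : IsIdeal I) :
    IsIdeal (f '' I) := by
  refine ⟨hI.1.image f, ?_⟩
  rintro _ ⟨a, ha, rfl⟩ s
  obtain ⟨t, rfl⟩ := hf s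
  exact ⟨⟨t * a, (hI.2 a ha t).1, map_mul f t a⟩, ⟨a * t, (hI.2 a ha t).2, map_mul f a t⟩⟩

theorem IsCompletelyPrime.image (f : M →ₙ* N) (hf : Function.Surjective f) {I : Set M}
    (hI : IsCompletelyPrime I) (hsat : f ⁻¹' (f '' I) ⊆ I) : IsCompletelyPrime (f '' I) := by
  intro x y hx hy hxy
  obtain ⟨p, rfl⟩ := hf x
  obtain ⟨q, rfl⟩ := hf y
  refine hI p q (fun hp => hx ⟨p, hp, rfl⟩) (fun hq => hy ⟨q, hq, rfl⟩) (hsat ?_)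
  rwa [mem_preimage, map_mul]

end SemigroupIdeals

theorem prod_union_ne_univ {M N : Type*} {I : Set M} {J : Set N} (hI : I ≠ univ)
    (hJ : J ≠ univ) :
    I ×ˢ (univ : Set N) ∪ (univ : Set M) ×ˢ J ≠ univ := by
  obtain ⟨a, ha⟩ := ne_univ_iff_exists_notMem I |>.mp hI
  obtain ⟨b, hb⟩ := ne_univ_iff_exists_notMem J |>.mp hJ
  rw [ne_univ_iff_exists_notMem]
  exact ⟨(a, b), by simp [ha, hb]⟩

open Classical in
/-- Multiplication on `Bool` is `&&`, so `ULift Bool` is the two-element semilattice. -/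
noncomputable def IsCompletelyPrime.complIndicator {S : Type*} [Mul S] {I : Set S}
    (hcp : IsCompletelyPrime I) (hI : IsIdeal I) : S →ₙ* ULift Bool where
  toFun x := ⟨decide (x ∉ I)⟩
  map_mul' x y := congrArg ULift.up <| by
    show decide (x * y ∉ I) = (decide (x ∉ I) && decide (y ∉ I))
    by_cases hx : x ∈ I
    · simp [hx, (hI.2 x hx y).2]
    by_cases hy : y ∈ I
    · simp [hy, (hI.2 y hy x).1]
    simp [hx, hy, hcp x y hx hy]

theorem IsCompletelyPrime.not_semilatticeIndecomposable {S : Type u} [Semigroup S] {I : Set S}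
    (hcp : IsCompletelyPrime I) (hI : IsIdeal I) (hne : I ≠ univ) :
    ¬ SemilatticeIndecomposable S := by
  intro hS
  obtain ⟨a, ha⟩ := hI.1
  obtain ⟨b, hb⟩ := ne_univ_iff_exists_notMem I |>.mp hne
  have := hS (ULift.{u} Bool) (fun x y => ULift.ext _ _ (Bool.and_comm _ _))
    (fun x => ULift.ext _ _ (Bool.and_self _)) (hcp.complIndicator hI) a b
  simp [IsCompletelyPrime.complIndicator, ha, hb] at this

theorem reesMap_of_ne_zero {p : A × B} (hp : p.1 ≠ 0 ∧ p.2 ≠ 0) : reesMap p = some ⟨p, hp⟩ :=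
  dif_pos hp

theorem reesMap_eq_zero {p : A × B} (hp : p.1 = 0 ∨ p.2 = 0) : reesMap p = 0 :=
  dif_neg (not_and_or.mpr (hp.imp not_not.mpr not_not.mpr))

theorem reesMap_mul (p q : A × B) : reesMap (p * q) = reesMap p * reesMap q := by
  by_cases hp : p.1 = 0 ∨ p.2 = 0
  · rw [reesMap_eq_zero hp, zero_mul, reesMap_eq_zero]
    rcases hp with h | h <;> simp [h]
  by_cases hq : q.1 = 0 ∨ q.2 = 0
  · rw [reesMap_eq_zero hq, mul_zero, reesMap_eq_zero]
    rcases hq with h | h <;> simp [h]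
  rw [not_or] at hp hq
  rw [reesMap_of_ne_zero hp, reesMap_of_ne_zero hq]
  rfl

noncomputable def reesHom : A × B →ₙ* ZProd A B := ⟨reesMap, reesMap_mul⟩

theorem reesMap_surjective : Function.Surjective (reesMap : A × B → ZProd A B)
  | none => ⟨0, reesMap_eq_zero (Or.inl rfl)⟩
  | some p => ⟨p.val, reesMap_of_ne_zero p.prop⟩

theorem reesMap_preimage_image_subset {S : Set (A × B)}
    (hS : ∀ p : A × B, p.1 = 0 ∨ p.2 = 0 → p ∈ S) : reesMap ⁻¹' (reesMap '' S) ⊆ S := by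
  rintro p ⟨q, hq, hqp⟩
  by_cases hp : p.1 = 0 ∨ p.2 = 0
  · exact hS p hp
  have hq0 : ¬(q.1 = 0 ∨ q.2 = 0) := fun h0 => by
    rw [reesMap_eq_zero h0, reesMap_of_ne_zero (not_or.mp hp)] at hqp
    exact Option.some_ne_none _ hqp.symm
  rw [reesMap_of_ne_zero (not_or.mp hp), reesMap_of_ne_zero (not_or.mp hq0)] at hqp
  obtain rfl : q = p := congrArg Subtype.val (Option.some_injective _ hqp)
  exact hq

/-- If `P_A ⊂ A` and `P_B ⊂ B` are proper completely prime ideals, then the image of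
`(P_A × B) ∪ (A × P_B)` in `A ×₀ B` is a proper completely prime ideal; in particular
`A ×₀ B` is not semilattice indecomposable. -/
theorem stmt_5 (PA : Set A) (PB : Set B)
    (hPA : IsIdeal PA) (hPA' : PA ≠ Set.univ) (hPA'' : IsCompletelyPrime PA)
    (hPB : IsIdeal PB) (hPB' : PB ≠ Set.univ) (hPB'' : IsCompletelyPrime PB) :
    (IsIdeal (reesMap '' ((PA ×ˢ (Set.univ : Set B)) ∪ ((Set.univ : Set A) ×ˢ PB))) ∧
      reesMap '' ((PA ×ˢ (Set.univ : Set B)) ∪ ((Set.univ : Set A) ×ˢ PB)) ≠ Set.univ ∧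
      IsCompletelyPrime (reesMap '' ((PA ×ˢ (Set.univ : Set B)) ∪ ((Set.univ : Set A) ×ˢ PB)))) ∧
    ¬ SemilatticeIndecomposable (ZProd A B) := by
  set S := PA ×ˢ (univ : Set B) ∪ (univ : Set A) ×ˢ PB
  have hsat : reesMap ⁻¹' (reesMap '' S) ⊆ S := reesMap_preimage_image_subset fun p hp =>
    hp.elim (fun h => Or.inl ⟨h ▸ hPA.zero_mem, trivial⟩)
      (fun h => Or.inr ⟨trivial, h ▸ hPB.zero_mem⟩)
  have hideal : IsIdeal (reesMap '' S) := (hPA.prod_union hPB).image reesHom reesMap_surjective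
  have hcp : IsCompletelyPrime (reesMap '' S) :=
    (hPA''.prod_union hPB'').image reesHom reesMap_surjective hsat
  have hproper : reesMap '' S ≠ univ := fun h =>
    prod_union_ne_univ hPA' hPB' (univ_subset_iff.mp (by rwa [← preimage_univ, ← h]))
  exact ⟨⟨hideal, hproper, hcp⟩, hcp.not_semilatticeIndecomposable hideal hproper⟩
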